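/- arXiv:2505.11930 — 3 statements merged into one kernel-verified Lean document; each statement's English description precedes it below -/
import Mathlib

section
/- For every formula φ of the product logic PTL_{P,Y}×K there exists a recursive TGNN T = (M, out) with M ∈ M̂ that captures φ, i.e., for every discrete pointed temporal graph (TG,(v,t_n)) coloured with the colours of φ: TG,(v,t_n) ⊨ φ if and only if T(TG,v) = 1. (In short, PTL_{P,Y}×K ≤ T_rec[M̂].) -/
set_option maxHeartbeats 1000000

/-! ### Vectors -/

/-- Real vectors of dimension `d`. -/
abbrev Vec (d : ℕ) := Fin d → ℝ

/-- Cast a vector along an equality of dimensions. -/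
def Vec.cast {m n : ℕ} (h : m = n) (x : Vec m) : Vec n := fun j => x (Fin.cast h.symm j)

/-- Truncated ReLU. -/
noncomputable def trReLU (x : ℝ) : ℝ := max 0 (min 1 x)

/-- A single FNN layer: an affine map with rational weights followed by entrywise trReLU. -/
structure AffineLayer (m n : ℕ) where
  weight : Fin n → Fin m → ℚ
  bias : Fin n → ℚ

noncomputable def AffineLayer.eval {m n : ℕ} (l : AffineLayer m n) (x : Vec m) : Vec n :=
  fun j => trReLU ((∑ i, (l.weight j i : ℝ) * x i) + (l.bias j : ℝ))

/-- A feedforward neural network with trReLU activations,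
of input dimension `m` and output dimension `n`. -/
structure FNN (m n : ℕ) where
  depth : ℕ
  dims : ℕ → ℕ
  dim_in : dims 0 = m
  dim_out : dims depth = n
  layers : ∀ i : ℕ, AffineLayer (dims i) (dims (i + 1))

noncomputable def FNN.evalAux {m n : ℕ} (N : FNN m n) : (i : ℕ) → Vec (N.dims 0) → Vec (N.dims i)
  | 0, x => x
  | i + 1, x => (N.layers i).eval (N.evalAux i x)

noncomputable def FNN.eval {m n : ℕ} (N : FNN m n) (x : Vec m) : Vec n :=
  Vec.cast N.dim_out (N.evalAux N.depth (Vec.cast N.dim_in.symm x))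

/-! ### Message-passing GNNs -/

/-- A general message-passing GNN: a finite sequence of layers, each consisting of an
arbitrary multiset-aggregation function and an arbitrary combination function. -/
structure MPNN where
  depth : ℕ
  dims : ℕ → ℕ
  aggDims : ℕ → ℕ
  agg : ∀ i : ℕ, Multiset (Vec (dims i)) → Vec (aggDims i)
  comb : ∀ i : ℕ, Vec (dims i) → Vec (aggDims i) → Vec (dims (i + 1))

/-- Embeddings computed by an MPNN on a labelled graph (given by a symmetric boolean
adjacency function and a labelling `c`). -/
noncomputable def MPNN.emb (M : MPNN) {V : Type} [Fintype V] [DecidableEq V]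
    (adj : V → V → Bool) (c : V → Vec (M.dims 0)) : (i : ℕ) → V → Vec (M.dims i)
  | 0 => c
  | i + 1 => fun v =>
      M.comb i (M.emb adj c i v)
        (M.agg i ((Finset.univ.filter fun u => adj v u = true).val.map
          fun u => M.emb adj c i u))

/-- The final embedding `M(G,v)`. -/
noncomputable def MPNN.run (M : MPNN) {V : Type} [Fintype V] [DecidableEq V]
    (adj : V → V → Bool) (c : V → Vec (M.dims 0)) (v : V) : Vec (M.dims M.depth) :=
  M.emb adj c M.depth v

/-- Entrywise sum of a multiset of vectors. -/
noncomputable def sumAgg (d : ℕ) (S : Multiset (Vec d)) : Vec d :=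
  fun j => (S.map fun x => x j).sum

/-- The class `M̂`: MPNNs whose combination functions are realised by FNNs with trReLU
activations and whose aggregation is the entrywise sum of the multiset. -/
structure MPNNhat where
  depth : ℕ
  dims : ℕ → ℕ
  comb : ∀ i : ℕ, FNN (dims i + dims i) (dims (i + 1))

noncomputable def MPNNhat.toMPNN (M : MPNNhat) : MPNN where
  depth := M.depth
  dims := M.dims
  aggDims := M.dims
  agg := fun i => sumAgg (M.dims i)
  comb := fun i x y => (M.comb i).eval (Fin.append x y)

/-! ### Discrete temporal graphs -/

/-- A discrete temporal graph over vertex set `V` with `k` colours: a sequence of `len`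
snapshots (indexed `0, …, len - 1`, the timestamp of index `i` being `i + 1`), each with a
symmetric set of undirected edges and a `{0,1}`-colouring of the nodes. -/
structure TemporalGraph (V : Type) (k : ℕ) where
  len : ℕ
  len_pos : 0 < len
  adj : ℕ → V → V → Bool
  symm : ∀ i u w, adj i u w = adj i w u
  label : ℕ → V → Fin k → Bool

/-- The colour vector of node `v` at time index `i`, as a real vector. -/
noncomputable def TemporalGraph.colVec {V : Type} {k : ℕ} (TG : TemporalGraph V k)
    (i : ℕ) (v : V) : Vec k :=
  fun j => if TG.label i v j then 1 else 0

/-! ### The product logic PTL_{P,Y} × K -/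

/-- Formulas of the product logic `PTL_{P,Y} × K` over `k` colour propositions. -/
inductive PTLK (k : ℕ) : Type where
  | colour : Fin k → PTLK k
  | not : PTLK k → PTLK k
  | and : PTLK k → PTLK k → PTLK k
  | dia : PTLK k → PTLK k
  | yest : PTLK k → PTLK k
  | past : PTLK k → PTLK k

/-- Satisfaction of a formula at timestamped node `(v, i)` (time indices start at `0`). -/
def Sat {V : Type} {k : ℕ} (TG : TemporalGraph V k) : PTLK k → ℕ → V → Prop
  | .colour j, i, v => TG.label i v j = true
  | .not φ, i, v => ¬ Sat TG φ i v
  | .and φ ψ, i, v => Sat TG φ i v ∧ Sat TG ψ i v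
  | .dia φ, i, v => ∃ u : V, TG.adj i v u = true ∧ Sat TG φ i u
  | .yest φ, i, v => 0 < i ∧ Sat TG φ (i - 1) v
  | .past φ, i, v => ∃ j < i, Sat TG φ j v

/-- The list of subformulas of a formula (containing the formula itself). -/
def PTLK.subformulas {k : ℕ} : PTLK k → List (PTLK k)
  | .colour j => [.colour j]
  | .not φ => .not φ :: φ.subformulas
  | .and φ ψ => .and φ ψ :: (φ.subformulas ++ ψ.subformulas)
  | .dia φ => .dia φ :: φ.subformulas
  | .yest φ => .yest φ :: φ.subformulas
  | .past φ => .past φ :: φ.subformulas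

/-- A formula is temporal if its outermost operator is `Y` or `P`. -/
def PTLK.isTemporal {k : ℕ} : PTLK k → Prop
  | .yest _ => True
  | .past _ => True
  | _ => False

/-- A formula is atomic if it is a colour proposition. -/
def PTLK.isAtomic {k : ℕ} : PTLK k → Prop
  | .colour _ => True
  | _ => False

/-! ### Recursive TGNNs over M̂ -/

/-- A recursive TGNN `T = (M, out)` with `M ∈ M̂`: the input dimension of `M` is
`k + d` where `d` is the output dimension of `M`, and `out` is a single-layer FNN with
trReLU activation. -/
structure RecTGNN (k : ℕ) where
  M : MPNNhat
  dim_in : M.dims 0 = k + M.dims M.depth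
  out : AffineLayer (M.dims M.depth) 1

/-- The state `h_v^{(depth)}(t_i)` computed by a recursive TGNN. -/
noncomputable def RecTGNN.state {k : ℕ} (T : RecTGNN k) {V : Type} [Fintype V] [DecidableEq V]
    (TG : TemporalGraph V k) : ℕ → V → Vec (T.M.dims T.M.depth)
  | 0 => fun v => T.M.toMPNN.run (TG.adj 0)
      (fun u => Vec.cast T.dim_in.symm (Fin.append (TG.colVec 0 u) (fun _ => 0))) v
  | i + 1 => fun v => T.M.toMPNN.run (TG.adj (i + 1))
      (fun u => Vec.cast T.dim_in.symm (Fin.append (TG.colVec (i + 1) u) (T.state TG i u))) v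

/-- The input labelling `h_v^{(0)}(t_i)` fed to `M` at time index `i`. -/
noncomputable def RecTGNN.input {k : ℕ} (T : RecTGNN k) {V : Type} [Fintype V] [DecidableEq V]
    (TG : TemporalGraph V k) : ℕ → V → Vec (T.M.dims 0)
  | 0 => fun u => Vec.cast T.dim_in.symm (Fin.append (TG.colVec 0 u) (fun _ => 0))
  | i + 1 => fun u => Vec.cast T.dim_in.symm (Fin.append (TG.colVec (i + 1) u) (T.state TG i u))

/-- The output `T(TG, v)` of a recursive TGNN at the last time index. -/
noncomputable def RecTGNN.output {k : ℕ} (T : RecTGNN k) {V : Type} [Fintype V] [DecidableEq V]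
    (TG : TemporalGraph V k) (v : V) : ℝ :=
  T.out.eval (T.state TG (TG.len - 1) v) 0

/-- `T` captures `φ`: on every discrete pointed temporal graph, `T` outputs `1`
iff `φ` is satisfied at the distinguished node at the last timestamp. -/
def RecTGNN.captures {k : ℕ} (T : RecTGNN k) (φ : PTLK k) : Prop :=
  ∀ (V : Type) [Fintype V] [DecidableEq V], ∀ (TG : TemporalGraph V k) (v : V),
    Sat TG φ (TG.len - 1) v ↔ T.output TG v = 1

/-! ### Time-and-graph TGNNs -/

/-- A time-and-graph TGNN `T = (M₁, M₂, Cell, out)` with arbitrary MPNNs `M₁, M₂` (of the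
same number of layers), arbitrary cell function and arbitrary output function. -/
structure TandGTGNN (k : ℕ) where
  M₁ : MPNN
  M₂ : MPNN
  sameDepth : M₁.depth = M₂.depth
  hdim : ℕ
  dim1 : M₁.dims 0 = k
  dim2 : M₂.dims 0 = hdim
  cell : Vec (M₁.dims M₁.depth) → Vec (M₂.dims M₂.depth) → Vec hdim
  out : Vec hdim → ℝ

noncomputable def TandGTGNN.state {k : ℕ} (T : TandGTGNN k) {V : Type} [Fintype V]
    [DecidableEq V] (TG : TemporalGraph V k) : ℕ → V → Vec T.hdim
  | 0 => fun v => T.cell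
      (T.M₁.run (TG.adj 0) (fun u => Vec.cast T.dim1.symm (TG.colVec 0 u)) v)
      (T.M₂.run (TG.adj 0) (fun _ => Vec.cast T.dim2.symm (fun _ => 0)) v)
  | i + 1 => fun v => T.cell
      (T.M₁.run (TG.adj (i + 1)) (fun u => Vec.cast T.dim1.symm (TG.colVec (i + 1) u)) v)
      (T.M₂.run (TG.adj (i + 1)) (fun u => Vec.cast T.dim2.symm (T.state TG i u)) v)

noncomputable def TandGTGNN.output {k : ℕ} (T : TandGTGNN k) {V : Type} [Fintype V]
    [DecidableEq V] (TG : TemporalGraph V k) (v : V) : ℝ :=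
  T.out (T.state TG (TG.len - 1) v)

def TandGTGNN.captures {k : ℕ} (T : TandGTGNN k) (φ : PTLK k) : Prop :=
  ∀ (V : Type) [Fintype V] [DecidableEq V], ∀ (TG : TemporalGraph V k) (v : V),
    Sat TG φ (TG.len - 1) v ↔ T.output TG v = 1

/-- Membership of a time-and-graph TGNN in the class `T_TandG[M̂, F]`: both MPNNs lie in
`M̂`, the cell is a single-layer FNN with trReLU activations, and so is the output. -/
def TandGTGNN.inHatF {k : ℕ} (T : TandGTGNN k) : Prop :=
  (∃ N₁ : MPNNhat, T.M₁ = N₁.toMPNN) ∧ (∃ N₂ : MPNNhat, T.M₂ = N₂.toMPNN) ∧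
  (∃ C : AffineLayer (T.M₁.dims T.M₁.depth + T.M₂.dims T.M₂.depth) T.hdim,
     ∀ x y, T.cell x y = C.eval (Fin.append x y)) ∧
  (∃ O : AffineLayer T.hdim 1, ∀ x, T.out x = O.eval x 0)

/-! ### Global TGNNs -/

/-- An operation combining an embedding vector with a time-feature vector of dimension `m`. -/
structure GlobOp (m : ℕ) where
  cdim : ℕ → ℕ
  op : ∀ d : ℕ, Vec d → Vec m → Vec (cdim d)

/-- A global TGNN `T = (M, φ', out)` with arbitrary MPNN components, arbitrary time
function, arbitrary combining operation and arbitrary output function. -/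
structure GlobTGNN (k : ℕ) where
  tdim : ℕ
  circ : GlobOp tdim
  timeFn : ℝ → Vec tdim
  depth : ℕ
  dims : ℕ → ℕ
  dim_in : dims 0 = k
  aggDims : ℕ → ℕ
  agg : ∀ i : ℕ, Multiset (Vec (circ.cdim (dims i))) → Vec (aggDims i)
  comb : ∀ i : ℕ, Vec (dims i) → Vec (aggDims i) → Vec (dims (i + 1))
  out : Vec (dims depth) → ℝ

/-- The embeddings `h_v^{(i)}(t_j)` computed by a global TGNN. -/
noncomputable def GlobTGNN.emb {k : ℕ} (T : GlobTGNN k) {V : Type} [Fintype V] [DecidableEq V]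
    (TG : TemporalGraph V k) : (i : ℕ) → ℕ → V → Vec (T.dims i)
  | 0 => fun j v => Vec.cast T.dim_in.symm (TG.colVec j v)
  | i + 1 => fun j v =>
      T.comb i (T.emb TG i j v)
        (T.agg i ((Finset.range (j + 1)).val.bind fun h =>
          (Finset.univ.filter fun u => TG.adj h v u = true).val.map
            fun u => T.circ.op _ (T.emb TG i h u) (T.timeFn ((j : ℝ) - (h : ℝ)))))

noncomputable def GlobTGNN.output {k : ℕ} (T : GlobTGNN k) {V : Type} [Fintype V]
    [DecidableEq V] (TG : TemporalGraph V k) (v : V) : ℝ :=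
  T.out (T.emb TG T.depth (TG.len - 1) v)

def GlobTGNN.captures {k : ℕ} (T : GlobTGNN k) (φ : PTLK k) : Prop :=
  ∀ (V : Type) [Fintype V] [DecidableEq V], ∀ (TG : TemporalGraph V k) (v : V),
    Sat TG φ (TG.len - 1) v ↔ T.output TG v = 1

/-- Vector concatenation as the combining operation `∥`. -/
def concatOp (m : ℕ) : GlobOp m where
  cdim := fun d => d + m
  op := fun _ x y => Fin.append x y

/-- A time2vec function. -/
structure Time2Vec (m : ℕ) where
  w : Fin m → ℚ
  b : Fin m → ℚ
  σ : ℝ → ℝ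
  period : ℝ
  period_pos : 0 < period
  periodic : Function.Periodic σ period

noncomputable def Time2Vec.eval {m : ℕ} (f : Time2Vec m) (t : ℝ) : Vec m :=
  fun j => if (j : ℕ) = 0 then (f.w j : ℝ) * t + (f.b j : ℝ)
           else f.σ ((f.w j : ℝ) * t + (f.b j : ℝ))

/-- The class `T_glob[M̂_msg, Q_time2vec, ∥]`: global TGNNs whose MPNN lies in `M̂_msg`
(combination functions given by trReLU FNNs and aggregation `agg S = Σ_{x∈S} msg(x)` with
`msg` a trReLU FNN), whose time function is a time2vec function, and whose combining
operation is vector concatenation; the output is a single-layer trReLU FNN. -/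
structure GlobTGNNmsg (k : ℕ) where
  tdim : ℕ
  timeFn : Time2Vec tdim
  depth : ℕ
  dims : ℕ → ℕ
  dim_in : dims 0 = k
  aggDims : ℕ → ℕ
  msg : ∀ i : ℕ, FNN (dims i + tdim) (aggDims i)
  comb : ∀ i : ℕ, FNN (dims i + aggDims i) (dims (i + 1))
  out : AffineLayer (dims depth) 1

noncomputable def GlobTGNNmsg.toGlob {k : ℕ} (T : GlobTGNNmsg k) : GlobTGNN k where
  tdim := T.tdim
  circ := concatOp T.tdim
  timeFn := T.timeFn.eval
  depth := T.depth
  dims := T.dims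
  dim_in := T.dim_in
  aggDims := T.aggDims
  agg := fun i S => sumAgg (T.aggDims i) (S.map (T.msg i).eval)
  comb := fun i x y => (T.comb i).eval (Fin.append x y)
  out := fun x => (T.out).eval x 0

noncomputable def GlobTGNNmsg.output {k : ℕ} (T : GlobTGNNmsg k) {V : Type} [Fintype V]
    [DecidableEq V] (TG : TemporalGraph V k) (v : V) : ℝ :=
  T.toGlob.output TG v

def GlobTGNNmsg.captures {k : ℕ} (T : GlobTGNNmsg k) (φ : PTLK k) : Prop :=
  ∀ (V : Type) [Fintype V] [DecidableEq V], ∀ (TG : TemporalGraph V k) (v : V),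
    Sat TG φ (TG.len - 1) v ↔ T.output TG v = 1

/-! The recursive TGNN for `φ` keeps one slot for every entry of the subformula list `L` of `φ`
and, at each time step, recomputes the truth values of all of them at all nodes. Its input layer
reads the colours and the previous state: `Y ψ` is the old value of `ψ`, and `P ψ` is evaluated
through `P ψ ↔ Y ψ ∨ Y P ψ`. Each of the following `|L|` propagation layers evaluates `¬`, `∧`
and `◇` from the values of the layer before (a sum over the neighbours for `◇`) and copies the
other slots, so a non-temporal subformula `ψ` is correct after `|ψ.subformulas| - 1` propagation
layers. On `0/1` inputs, truncated ReLU turns `1 - x`, `x + y - 1`, `x + y` and `∑ x` into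
Boolean gates. -/

open Finset

noncomputable instance PTLK.instDecidableEq {k : ℕ} : DecidableEq (PTLK k) := Classical.decEq _

open Classical in
noncomputable def truthValue (p : Prop) : ℝ := if p then 1 else 0

section TruthValue

variable {p q : Prop}

lemma truthValue_of (h : p) : truthValue p = 1 := by simp [truthValue, h]

lemma truthValue_of_not (h : ¬p) : truthValue p = 0 := by simp [truthValue, h]

lemma truthValue_nonneg (p : Prop) : 0 ≤ truthValue p := by
  unfold truthValue; split <;> norm_num

lemma truthValue_eq_one_iff : truthValue p = 1 ↔ p := by
  by_cases h : p <;> simp [truthValue, h]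

lemma trReLU_truthValue : trReLU (truthValue p) = truthValue p := by
  by_cases h : p <;> simp [truthValue, trReLU, h]

lemma trReLU_one_sub_truthValue : trReLU (1 - truthValue p) = truthValue ¬p := by
  by_cases h : p <;> simp [truthValue, trReLU, h]

lemma trReLU_truthValue_add_sub_one :
    trReLU (truthValue p + truthValue q - 1) = truthValue (p ∧ q) := by
  by_cases hp : p <;> by_cases hq : q <;> norm_num [truthValue, trReLU, hp, hq]

lemma trReLU_truthValue_add : trReLU (truthValue p + truthValue q) = truthValue (p ∨ q) := by
  by_cases hp : p <;> by_cases hq : q <;> norm_num [truthValue, trReLU, hp, hq]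

lemma trReLU_sum_truthValue {ι : Type*} (s : Finset ι) (P : ι → Prop) :
    trReLU (∑ i ∈ s, truthValue (P i)) = truthValue (∃ i ∈ s, P i) := by
  by_cases h : ∃ i ∈ s, P i
  · obtain ⟨i, hi, hPi⟩ := h
    have hone : 1 ≤ ∑ i ∈ s, truthValue (P i) := by
      calc (1 : ℝ) = truthValue (P i) := (truthValue_of hPi).symm
        _ ≤ ∑ i ∈ s, truthValue (P i) :=
          single_le_sum (f := fun i => truthValue (P i)) (fun j _ => truthValue_nonneg _) hi
    rw [truthValue_of ⟨i, hi, hPi⟩, trReLU, min_eq_left hone, max_eq_right zero_le_one]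
  · simp only [not_exists, not_and] at h
    rw [sum_eq_zero fun i hi => truthValue_of_not (h i hi), truthValue_of_not (by simpa using h)]
    simp [trReLU]

end TruthValue

noncomputable def dot {n : ℕ} (w : Fin n → ℚ) (x : Vec n) : ℝ := ∑ i, (w i : ℝ) * x i

section Dot

variable {a b n : ℕ}

lemma AffineLayer.eval_apply (l : AffineLayer n a) (x : Vec n) (j : Fin a) :
    l.eval x j = trReLU (dot (l.weight j) x + l.bias j) := rfl

@[simp] lemma dot_zero_left (x : Vec n) : dot 0 x = 0 := by simp [dot]

@[simp] lemma dot_add_left (w w' : Fin n → ℚ) (x : Vec n) :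
    dot (w + w') x = dot w x + dot w' x := by
  simp [dot, add_mul, sum_add_distrib]

@[simp] lemma dot_append (w : Fin a → ℚ) (w' : Fin b → ℚ) (x : Vec a) (y : Vec b) :
    dot (Fin.append w w') (Fin.append x y) = dot w x + dot w' y := by
  simp [dot, Fin.sum_univ_add]

def coordRow (n a : ℕ) (c : ℚ) : Fin n → ℚ := fun i => if (i : ℕ) = a then c else 0

lemma dot_coordRow {c : ℚ} (h : a < n) (x : Vec n) : dot (coordRow n a c) x = c * x ⟨a, h⟩ := by
  rw [dot, sum_eq_single ⟨a, h⟩ (fun i _ hi => by simp [coordRow, Fin.val_ne_iff.mpr hi])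
    (by simp)]
  simp [coordRow]

lemma dot_coordRow_idxOf {α : Type*} [DecidableEq α] {L : List α} {x : Vec L.length} {u : α}
    (hu : u ∈ L) {r : ℝ} (hx : ∀ j : Fin L.length, L[j] = u → x j = r) (c : ℚ) :
    dot (coordRow L.length (L.idxOf u) c) x = c * r := by
  have hlt := List.idxOf_lt_length_of_mem hu
  rw [dot_coordRow hlt, hx _ (List.getElem_idxOf hlt)]

end Dot

structure Row (a b : ℕ) where
  left : Fin a → ℚ
  right : Fin b → ℚ
  bias : ℚ

namespace Row

variable {a b c n : ℕ}

noncomputable def eval (r : Row a b) (x : Vec a) (y : Vec b) : ℝ :=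
  dot r.left x + dot r.right y + r.bias

def toLayer (r : Fin n → Row a b) : AffineLayer (a + b) n where
  weight j := Fin.append (r j).left (r j).right
  bias j := (r j).bias

lemma toLayer_eval (r : Fin n → Row a b) (x : Vec a) (y : Vec b) (j : Fin n) :
    (toLayer r).eval (Fin.append x y) j = trReLU ((r j).eval x y) := by
  simp [AffineLayer.eval_apply, toLayer, eval]

def ignoreRight (r : Row a b) (c : ℕ) : Row (a + b) c := ⟨Fin.append r.left r.right, 0, r.bias⟩

@[simp] lemma ignoreRight_eval (r : Row a b) (x : Vec a) (y : Vec b) (z : Vec c) :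
    (r.ignoreRight c).eval (Fin.append x y) z = r.eval x y := by
  simp [ignoreRight, eval]

end Row

def FNN.ofLayer {m n : ℕ} (l : AffineLayer m n) : FNN m n where
  depth := 1
  dims | 0 => m | _ + 1 => n
  dim_in := rfl
  dim_out := rfl
  layers
    | 0 => l
    | _ + 1 => ⟨0, 0⟩

lemma sumAgg_map {V : Type} {d : ℕ} (s : Finset V) (f : V → Vec d) :
    sumAgg d (s.val.map f) = ∑ u ∈ s, f u := by
  ext j
  rw [Finset.sum_apply, Finset.sum, sumAgg, Multiset.map_map]
  rfl

lemma MPNNhat.emb_succ (M : MPNNhat) {V : Type} [Fintype V] [DecidableEq V]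
    (adj : V → V → Bool) (c : V → Vec (M.dims 0)) (i : ℕ) (v : V) :
    M.toMPNN.emb adj c (i + 1) v = (M.comb i).eval (Fin.append (M.toMPNN.emb adj c i v)
      (∑ u ∈ univ.filter (adj v · = true), M.toMPNN.emb adj c i u)) :=
  congrArg (fun y => (M.comb i).eval (Fin.append _ y)) (sumAgg_map _ _)

namespace PTLK

variable {k : ℕ}

lemma mem_subformulas_self (φ : PTLK k) : φ ∈ φ.subformulas := by
  cases φ <;> simp [subformulas]

lemma subformulas_sublist_of_mem {φ ψ : PTLK k} (h : ψ ∈ φ.subformulas) :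
    ψ.subformulas.Sublist φ.subformulas := by
  induction φ with
  | colour c =>
    obtain rfl : ψ = colour c := by simpa [subformulas] using h
    rfl
  | and φ₁ φ₂ ih₁ ih₂ =>
    simp only [subformulas, List.mem_cons, List.mem_append] at h
    rcases h with rfl | h | h
    · rfl
    · exact ((ih₁ h).trans (List.sublist_append_left _ _)).cons _
    · exact ((ih₂ h).trans (List.sublist_append_right _ _)).cons _
  | not φ ih | dia φ ih | yest φ ih | past φ ih =>
    simp only [subformulas, List.mem_cons] at h
    rcases h with rfl | h
    · rfl
    · exact (ih h).cons _

lemma one_le_length_subformulas (φ : PTLK k) : 1 ≤ φ.subformulas.length :=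
  List.length_pos_of_mem φ.mem_subformulas_self

end PTLK

section Semantics

variable {V : Type} {k : ℕ} (TG : TemporalGraph V k) (ψ : PTLK k) (v : V)

lemma sat_yest_zero : ¬ Sat TG (.yest ψ) 0 v := fun h => (lt_irrefl 0) h.1

lemma sat_yest_succ (i : ℕ) : Sat TG (.yest ψ) (i + 1) v ↔ Sat TG ψ i v := by
  simp [Sat]

lemma sat_past_iff_yest (i : ℕ) :
    Sat TG (.past ψ) i v ↔ Sat TG (.yest ψ) i v ∨ Sat TG (.yest (.past ψ)) i v := by
  cases i with
  | zero => simp [Sat]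
  | succ i =>
    simp only [sat_yest_succ]
    simp only [Sat, Nat.lt_succ_iff_lt_or_eq]
    constructor
    · rintro ⟨j, hj | rfl, h⟩
      exacts [Or.inr ⟨j, hj, h⟩, Or.inl h]
    · rintro (h | ⟨j, hj, h⟩)
      exacts [⟨i, Or.inr rfl, h⟩, ⟨j, Or.inl hj, h⟩]

lemma TemporalGraph.colVec_apply (i : ℕ) (c : Fin k) :
    TG.colVec i v c = truthValue (Sat TG (.colour c) i v) := by
  by_cases h : TG.label i v c <;> simp [TemporalGraph.colVec, truthValue, Sat, h]

end Semantics

def PTLK.IsReady {k : ℕ} (m : ℕ) (ψ : PTLK k) : Prop :=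
  ψ.isTemporal ∨ ψ.subformulas.length ≤ m + 1

section Construction

variable {k : ℕ} (L : List (PTLK k))

noncomputable def inputRow (j : ℕ) : PTLK k → Row k L.length
  | .colour c => ⟨coordRow k c 1, 0, 0⟩
  | .yest ψ => ⟨0, coordRow L.length (L.idxOf ψ) 1, 0⟩
  | .past ψ => ⟨0, coordRow L.length (L.idxOf ψ) 1 + coordRow L.length j 1, 0⟩
  | _ => ⟨0, 0, 0⟩

noncomputable def propagationRow (j : ℕ) : PTLK k → Row L.length L.length
  | .not ψ => ⟨coordRow L.length (L.idxOf ψ) (-1), 0, 1⟩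
  | .and ψ χ => ⟨coordRow L.length (L.idxOf ψ) 1 + coordRow L.length (L.idxOf χ) 1, 0, -1⟩
  | .dia ψ => ⟨0, coordRow L.length (L.idxOf ψ) 1, 0⟩
  | _ => ⟨coordRow L.length j 1, 0, 0⟩

noncomputable def subformulaNet : MPNNhat where
  depth := L.length + 1
  dims | 0 => k + L.length | _ + 1 => L.length
  comb
    | 0 => FNN.ofLayer (Row.toLayer fun j => (inputRow L j L[j]).ignoreRight (k + L.length))
    | _ + 1 => FNN.ofLayer (Row.toLayer fun j => propagationRow L j L[j])

variable {L} {V : Type} (TG : TemporalGraph V k) (i : ℕ)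

lemma mem_of_mem_subformulas (hL : ∀ ψ ∈ L, ψ.subformulas.Sublist L) {ψ χ : PTLK k}
    (hψ : ψ ∈ L) (hχ : χ ∈ ψ.subformulas) : χ ∈ L :=
  (hL ψ hψ).subset hχ

lemma inputRow_eval (hL : ∀ ψ ∈ L, ψ.subformulas.Sublist L) (v : V) (s : Vec L.length)
    (hs : ∀ j : Fin L.length, s j = truthValue (Sat TG (.yest L[j]) i v))
    (j : Fin L.length) (hj : L[j].IsReady 0) :
    trReLU ((inputRow L j L[j]).eval (TG.colVec i v) s) = truthValue (Sat TG L[j] i v) := by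
  have hmem : L[j] ∈ L := List.getElem_mem _
  have hsj := hs j
  generalize L[j] = ψ at hj hmem hsj
  cases ψ with
  | colour c =>
    simp [inputRow, Row.eval, dot_coordRow c.isLt, TemporalGraph.colVec_apply, trReLU_truthValue]
  | yest ψ =>
    have hψ := mem_of_mem_subformulas hL hmem (List.mem_cons_of_mem _ ψ.mem_subformulas_self)
    have hsψ := dot_coordRow_idxOf hψ (x := s) (r := truthValue (Sat TG (.yest ψ) i v))
      (fun j' h => by rw [hs j', h]) 1
    simp [inputRow, Row.eval, hsψ, trReLU_truthValue]
  | past ψ =>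
    have hψ := mem_of_mem_subformulas hL hmem (List.mem_cons_of_mem _ ψ.mem_subformulas_self)
    have hsψ := dot_coordRow_idxOf hψ (x := s) (r := truthValue (Sat TG (.yest ψ) i v))
      (fun j' h => by rw [hs j', h]) 1
    simp [inputRow, Row.eval, hsψ, dot_coordRow j.isLt, hsj, trReLU_truthValue_add,
      sat_past_iff_yest]
  | not ψ | and ψ χ | dia ψ =>
    have := ψ.one_le_length_subformulas
    simp only [PTLK.IsReady, PTLK.isTemporal, PTLK.subformulas, List.length_cons,
      List.length_append, false_or] at hj
    omega

variable [Fintype V]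

lemma propagationRow_eval (hL : ∀ ψ ∈ L, ψ.subformulas.Sublist L) (m : ℕ) (x : V → Vec L.length)
    (hx : ∀ u (j : Fin L.length), L[j].IsReady m → x u j = truthValue (Sat TG L[j] i u))
    (v : V) (j : Fin L.length) (hj : L[j].IsReady (m + 1)) :
    trReLU ((propagationRow L j L[j]).eval (x v) (∑ u ∈ univ.filter (TG.adj i v · = true), x u))
      = truthValue (Sat TG L[j] i v) := by
  have hmem : L[j] ∈ L := List.getElem_mem _
  have hxj := hx v j
  have hchild : ∀ χ : PTLK k, χ.subformulas.length ≤ m + 1 →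
      ∀ u (j' : Fin L.length), L[j'] = χ → x u j' = truthValue (Sat TG χ i u) := by
    rintro χ hχ u j' rfl
    exact hx u j' (Or.inr hχ)
  generalize L[j] = ψ at hj hmem hxj
  cases ψ with
  | colour c =>
    simp [propagationRow, Row.eval, dot_coordRow j.isLt,
      hxj (Or.inr (by simp [PTLK.subformulas])), trReLU_truthValue]
  | yest ψ | past ψ =>
    simp [propagationRow, Row.eval, dot_coordRow j.isLt,
      hxj (Or.inl trivial), trReLU_truthValue]
  | not ψ =>
    simp only [PTLK.IsReady, PTLK.isTemporal, PTLK.subformulas, List.length_cons, false_or] at hj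
    have hψ := mem_of_mem_subformulas hL hmem (List.mem_cons_of_mem _ ψ.mem_subformulas_self)
    have hψv := dot_coordRow_idxOf hψ (hchild ψ (by omega) v) (-1)
    simp [propagationRow, Row.eval, hψv, ← sub_eq_neg_add, trReLU_one_sub_truthValue, Sat]
  | and ψ χ =>
    simp only [PTLK.IsReady, PTLK.isTemporal, PTLK.subformulas, List.length_cons,
      List.length_append, false_or] at hj
    have := ψ.one_le_length_subformulas
    have := χ.one_le_length_subformulas
    have hψ := mem_of_mem_subformulas hL hmem
      (List.mem_cons_of_mem _ (List.mem_append_left _ ψ.mem_subformulas_self))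
    have hχ := mem_of_mem_subformulas hL hmem
      (List.mem_cons_of_mem _ (List.mem_append_right _ χ.mem_subformulas_self))
    have hψv := dot_coordRow_idxOf hψ (hchild ψ (by omega) v) 1
    have hχv := dot_coordRow_idxOf hχ (hchild χ (by omega) v) 1
    simp [propagationRow, Row.eval, hψv, hχv, ← sub_eq_add_neg, trReLU_truthValue_add_sub_one,
      Sat]
  | dia ψ =>
    simp only [PTLK.IsReady, PTLK.isTemporal, PTLK.subformulas, List.length_cons, false_or] at hj
    have hψ := mem_of_mem_subformulas hL hmem (List.mem_cons_of_mem _ ψ.mem_subformulas_self)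
    have hψv := dot_coordRow_idxOf hψ (x := ∑ u ∈ univ.filter (TG.adj i v · = true), x u)
      (r := ∑ u ∈ univ.filter (TG.adj i v · = true), truthValue (Sat TG ψ i u)) (fun j' h => by
        rw [Finset.sum_apply]
        exact sum_congr rfl fun u _ => hchild ψ (by omega) u j' h) 1
    simp [propagationRow, Row.eval, hψv, trReLU_sum_truthValue, Sat]

variable [DecidableEq V]

lemma subformulaNet_emb_eq_truthValue (hL : ∀ ψ ∈ L, ψ.subformulas.Sublist L)
    (s : V → Vec L.length)
    (hs : ∀ u (j : Fin L.length), s u j = truthValue (Sat TG (.yest L[j]) i u)) (m : ℕ) (v : V)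
    (j : Fin L.length) (hj : L[j].IsReady m) :
    (subformulaNet L).toMPNN.emb (TG.adj i) (fun u => Fin.append (TG.colVec i u) (s u))
      (m + 1) v j = truthValue (Sat TG L[j] i v) := by
  induction m generalizing v j with
  | zero =>
    refine (congrFun (MPNNhat.emb_succ (subformulaNet L) (TG.adj i) _ 0 v) j).trans ?_
    refine (Row.toLayer_eval _ (Fin.append (TG.colVec i v) (s v)) _ j).trans ?_
    exact (congrArg trReLU (Row.ignoreRight_eval _ _ _ _)).trans
      (inputRow_eval TG i hL v (s v) (hs v) j hj)
  | succ m ih =>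
    refine (congrFun (MPNNhat.emb_succ (subformulaNet L) (TG.adj i) _ (m + 1) v) j).trans ?_
    refine (Row.toLayer_eval _ _ _ j).trans ?_
    exact propagationRow_eval TG i hL m _ ih v j hj

lemma subformulaNet_run (hL : ∀ ψ ∈ L, ψ.subformulas.Sublist L) (s : V → Vec L.length)
    (hs : ∀ u (j : Fin L.length), s u j = truthValue (Sat TG (.yest L[j]) i u)) (v : V) :
    (subformulaNet L).toMPNN.run (TG.adj i) (fun u => Fin.append (TG.colVec i u) (s u)) v
      = fun j => truthValue (Sat TG L[j] i v) :=
  funext fun j => subformulaNet_emb_eq_truthValue TG i hL s hs L.length v j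
    (Or.inr ((hL _ (List.getElem_mem _)).length_le.trans (Nat.le_succ _)))

end Construction

namespace PTLK

variable {k : ℕ}

noncomputable def recTGNN (φ : PTLK k) : RecTGNN k where
  M := subformulaNet φ.subformulas
  dim_in := rfl
  out := ⟨fun _ => coordRow _ (φ.subformulas.idxOf φ) 1, fun _ => 0⟩

variable {V : Type} [Fintype V] [DecidableEq V] (φ : PTLK k) (TG : TemporalGraph V k)

lemma recTGNN_state (i : ℕ) :
    φ.recTGNN.state TG i = fun v j => truthValue (Sat TG φ.subformulas[j] i v) := by
  have hL : ∀ ψ ∈ φ.subformulas, ψ.subformulas.Sublist φ.subformulas :=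
    fun _ => subformulas_sublist_of_mem
  induction i with
  | zero =>
    funext v
    exact subformulaNet_run TG 0 hL (fun _ _ => 0)
      (fun u j => (truthValue_of_not (sat_yest_zero TG _ u)).symm) v
  | succ i ih =>
    funext v
    exact subformulaNet_run TG (i + 1) hL (φ.recTGNN.state TG i)
      (fun u j => by rw [ih]; exact congrArg truthValue (propext (sat_yest_succ TG _ u i)).symm) v

lemma recTGNN_output (v : V) :
    φ.recTGNN.output TG v = truthValue (Sat TG φ (TG.len - 1) v) := by
  have hφ := dot_coordRow_idxOf φ.mem_subformulas_self
    (x := fun j => truthValue (Sat TG φ.subformulas[j] (TG.len - 1) v))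
    (r := truthValue (Sat TG φ (TG.len - 1) v)) (fun j h => by rw [h]) 1
  rw [RecTGNN.output, AffineLayer.eval_apply, recTGNN_state]
  show trReLU (dot (coordRow φ.subformulas.length (φ.subformulas.idxOf φ) 1)
    (fun j : Fin φ.subformulas.length => truthValue (Sat TG φ.subformulas[j] (TG.len - 1) v))
      + ((0 : ℚ) : ℝ)) = _
  rw [hφ, Rat.cast_zero, Rat.cast_one, one_mul, add_zero, trReLU_truthValue]

end PTLK

/-- Theorem 1, `PTL_{P,Y}×K ≤ T_rec[M̂]`: every formula of the product
logic `PTL_{P,Y}×K` is captured by some recursive TGNN over `M̂`. -/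
theorem PTLK_le_TrecMhat : ∀ (k : ℕ) (φ : PTLK k), ∃ T : RecTGNN k, T.captures φ := by
  intro k φ
  refine ⟨φ.recTGNN, fun V _ _ TG v => ?_⟩
  rw [PTLK.recTGNN_output, truthValue_eq_one_iff]
end

section
/- No time-and-graph TGNN captures the formula φ = ◇(c_1 ∧ ◇Y c_2): for all MPNNs M_1, M_2 (with arbitrary combination functions and arbitrary multiset-aggregation functions, M_1 and M_2 having the same number of layers) and all functions Cell and out, the time-and-graph TGNN T = (M_1,M_2,Cell,out) does not capture φ. Consequently, PTL_{P,Y}×K ≤ T_TandG[M,C] fails for every class M of MPNNs and every class C of cell functions. -/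
set_option maxHeartbeats 1000000

/-- The formula `◇(c₁ ∧ ◇Y c₂)` (colours `c₁ = 0`, `c₂ = 1`). -/
def phiCounter : PTLK 2 := .dia (.and (.colour 0) (.dia (.yest (.colour 1))))

/-! ### Auxiliary material for the proof -/

/-- Decidability of satisfaction over a finite vertex set. -/
def satDec {V : Type} [Fintype V] [DecidableEq V] {k : ℕ} (TG : TemporalGraph V k) :
    ∀ (φ : PTLK k) (i : ℕ) (v : V), Decidable (Sat TG φ i v)
  | .colour j, i, v => by unfold Sat; infer_instance
  | .not φ, i, v => by unfold Sat; exact @instDecidableNot _ (satDec TG φ i v)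
  | .and φ ψ, i, v => by
      unfold Sat; exact @instDecidableAnd _ _ (satDec TG φ i v) (satDec TG ψ i v)
  | .dia φ, i, v => by
      unfold Sat
      exact @Fintype.decidableExistsFintype _
        (fun u => TG.adj i v u = true ∧ Sat TG φ i u)
        (fun u => @instDecidableAnd _ _ (by infer_instance) (satDec TG φ i u)) _
  | .yest φ, i, v => by
      unfold Sat; exact @instDecidableAnd _ _ (by infer_instance) (satDec TG φ (i - 1) v)
  | .past φ, i, v => by
      unfold Sat
      haveI : DecidablePred (fun j => Sat TG φ j v) := fun j => satDec TG φ j v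
      exact decidable_of_iff (∃ j ∈ Finset.range i, Sat TG φ j v)
        (by simp [Finset.mem_range])

instance {V : Type} [Fintype V] [DecidableEq V] {k : ℕ} (TG : TemporalGraph V k)
    (φ : PTLK k) (i : ℕ) (v : V) : Decidable (Sat TG φ i v) := satDec TG φ i v

/-- Equivariance of MPNN embeddings under a graph isomorphism. -/
lemma MPNN.emb_equivariant (M : MPNN) {V : Type} [Fintype V] [DecidableEq V]
    (π : Equiv.Perm V) (adj adj' : V → V → Bool) (c c' : V → Vec (M.dims 0))
    (hadj : ∀ u w, adj' (π u) (π w) = adj u w) (hc : ∀ u, c' (π u) = c u) :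
    ∀ (i : ℕ) (v : V), M.emb adj' c' i (π v) = M.emb adj c i v := by
  intro i
  induction i with
  | zero => exact hc
  | succ i ih =>
    intro v
    show M.comb i _ _ = M.comb i _ _
    rw [ih v]
    have hfil : (Finset.univ.filter fun u => adj' (π v) u = true)
        = (Finset.univ.filter fun u => adj v u = true).map π.toEmbedding := by
      ext u
      simp only [Finset.mem_filter, Finset.mem_map, Finset.mem_univ, true_and,
        Equiv.coe_toEmbedding]
      constructor
      · intro h
        refine ⟨π.symm u, ?_, Equiv.apply_symm_apply π u⟩
        rw [← hadj v (π.symm u), Equiv.apply_symm_apply]; exact h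
      · rintro ⟨w, hw, rfl⟩; rw [hadj]; exact hw
    have hms : ((Finset.univ.filter fun u => adj' (π v) u = true).val.map
          (M.emb adj' c' i))
        = ((Finset.univ.filter fun u => adj v u = true).val.map (M.emb adj c i)) := by
      rw [hfil, Finset.map_val, Multiset.map_map]
      exact Multiset.map_congr rfl (fun u _ => ih u)
    rw [hms]

/-- On an edgeless graph, MPNN embeddings only depend on a node's own colour. -/
lemma MPNN.emb_empty (M : MPNN) {V : Type} [Fintype V] [DecidableEq V]
    (c c' : V → Vec (M.dims 0)) (u u' : V) (h : c u = c' u') :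
    ∀ i : ℕ, M.emb (fun _ _ => false) c i u = M.emb (fun _ _ => false) c' i u' := by
  intro i
  induction i with
  | zero => exact h
  | succ i ih =>
    show M.comb i _ _ = M.comb i _ _
    rw [ih]
    simp

/-- The time-1 edge relation of the counterexample graphs. -/
def edgeCE : Fin 5 → Fin 5 → Bool := fun u w =>
  decide ((u.val, w.val) ∈ [(0,1),(1,0),(0,2),(2,0),(1,3),(3,1),(2,4),(4,2)])

def adjCE : ℕ → Fin 5 → Fin 5 → Bool
  | 0 => fun _ _ => false
  | _ + 1 => edgeCE

lemma adjCE_symm : ∀ i u w, adjCE i u w = adjCE i w u := by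
  intro i u w
  cases i with
  | zero => rfl
  | succ i =>
    show edgeCE u w = edgeCE w u
    revert u w; decide

def labCE1 : Fin 5 → Fin 2 → Bool := fun u j => decide (u = 1 ∧ j = 0)

def labA : ℕ → Fin 5 → Fin 2 → Bool
  | 0 => fun u j => decide (u = 3 ∧ j = 1)
  | _ + 1 => labCE1

def labB : ℕ → Fin 5 → Fin 2 → Bool
  | 0 => fun u j => decide (u = 4 ∧ j = 1)
  | _ + 1 => labCE1

def TGA : TemporalGraph (Fin 5) 2 := ⟨2, by norm_num, adjCE, adjCE_symm, labA⟩
def TGB : TemporalGraph (Fin 5) 2 := ⟨2, by norm_num, adjCE, adjCE_symm, labB⟩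

/-- The swap `a ↔ b`, `p ↔ q` fixing the distinguished node `v = 0`. -/
def piCE : Fin 5 → Fin 5 := ![0, 2, 1, 4, 3]

lemma piCE_inv : Function.Involutive piCE := by
  show ∀ x, piCE (piCE x) = x
  decide

def piPerm : Equiv.Perm (Fin 5) := piCE_inv.toPerm

lemma piPerm_apply (u : Fin 5) : piPerm u = piCE u := rfl

lemma edgeCE_equiv : ∀ u w, edgeCE (piCE u) (piCE w) = edgeCE u w := by decide

lemma labCE_equiv : ∀ u j, labB 0 (piCE u) j = labA 0 u j := by decide

lemma main_TandG : ∀ T : TandGTGNN 2, ¬ T.captures phiCounter := by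
  intro T hcap
  have hA : Sat TGA phiCounter 1 0 := by decide
  have hB : ¬ Sat TGB phiCounter 1 0 := by decide
  -- states at time 0 agree up to the swap
  have hstate0 : ∀ u : Fin 5, T.state TGB 0 (piPerm u) = T.state TGA 0 u := by
    intro u
    show T.cell _ _ = T.cell _ _
    have h1 : T.M₁.run (TGB.adj 0)
        (fun w => Vec.cast T.dim1.symm (TGB.colVec 0 w)) (piPerm u)
        = T.M₁.run (TGA.adj 0)
          (fun w => Vec.cast T.dim1.symm (TGA.colVec 0 w)) u := by
      refine T.M₁.emb_empty _ _ (piPerm u) u ?_ T.M₁.depth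
      have : TGB.colVec 0 (piPerm u) = TGA.colVec 0 u := by
        funext j
        show (if labB 0 (piCE u) j then (1:ℝ) else 0) = (if labA 0 u j then 1 else 0)
        rw [labCE_equiv]
      rw [this]
    have h2 : T.M₂.run (TGB.adj 0)
        (fun _ => Vec.cast T.dim2.symm (fun _ => 0)) (piPerm u)
        = T.M₂.run (TGA.adj 0)
          (fun _ => Vec.cast T.dim2.symm (fun _ => 0)) u :=
      T.M₂.emb_empty _ _ (piPerm u) u rfl T.M₂.depth
    rw [h1, h2]
  -- states at time 1 at the distinguished node agree
  have hstate1 : T.state TGB 1 0 = T.state TGA 1 0 := by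
    show T.cell _ _ = T.cell _ _
    have h2 : T.M₂.run (TGB.adj 1)
        (fun w => Vec.cast T.dim2.symm (T.state TGB 0 w)) 0
        = T.M₂.run (TGA.adj 1)
          (fun w => Vec.cast T.dim2.symm (T.state TGA 0 w)) 0 := by
      have h0 : piPerm 0 = 0 := rfl
      calc T.M₂.run edgeCE (fun w => Vec.cast T.dim2.symm (T.state TGB 0 w)) 0
          = T.M₂.run edgeCE (fun w => Vec.cast T.dim2.symm (T.state TGB 0 w))
              (piPerm 0) := by rw [h0]
        _ = T.M₂.run edgeCE (fun w => Vec.cast T.dim2.symm (T.state TGA 0 w)) 0 := by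
            refine T.M₂.emb_equivariant piPerm edgeCE edgeCE _ _
              (fun u w => edgeCE_equiv u w) ?_ T.M₂.depth 0
            intro w
            rw [hstate0 w]
    rw [h2]
    rfl
  have houtEq : T.output TGB 0 = T.output TGA 0 := by
    show T.out (T.state TGB 1 0) = T.out (T.state TGA 1 0)
    rw [hstate1]
  have h1 : T.output TGA 0 = 1 := (hcap (Fin 5) TGA 0).mp hA
  exact hB ((hcap (Fin 5) TGB 0).mpr (houtEq.trans h1))

/-- Theorem 3: no time-and-graph TGNN captures `◇(c₁ ∧ ◇Y c₂)`;
consequently `PTL_{P,Y}×K ≤ T_TandG[M,C]` fails for every class of MPNNs and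
cell functions (in particular for the full class of all time-and-graph TGNNs). -/
theorem TandG_cannot_capture_PTLK :
    (∀ T : TandGTGNN 2, ¬ T.captures phiCounter) ∧
    ¬ (∀ φ : PTLK 2, ∃ T : TandGTGNN 2, T.captures φ) := by
  refine ⟨main_TandG, fun h => ?_⟩
  obtain ⟨T, hT⟩ := h phiCounter
  exact main_TandG T hT
end

section
/- T_rec[M̂] ≰ T_TandG[M̂,F]: there exists a recursive TGNN T ∈ T_rec[M̂] such that for every time-and-graph TGNN T' ∈ T_TandG[M̂,F] there is a discrete pointed temporal graph (TG,v) with T(TG,v) = 1 not equivalent to T'(TG,v) = 1. -/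
set_option maxHeartbeats 1000000

/-!
The recursive TGNN `recTGNN` updates the state of `v` to `c(v) ∨ ∃ u ~ v, c(u) ∧ state(u)`, so
at time 1 the centre of a star learns whether some leaf is coloured now *and* was coloured at
time 0. In `starTG 1` leaf 1 is coloured at both times; in `starTG 2` leaf 2 is coloured at
time 0 and leaf 1 at time 1; `recTGNN` separates them at the centre. A time-and-graph TGNN
cannot: time 0 is edgeless, so its states there depend only on the node's own colour and are
exchanged by swapping the two leaves; at time 1 the current colours, seen by `M₁`, agree, and
the previous states, seen by `M₂`, differ by that swap, an automorphism of the star fixing the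
centre. As `M₁` and `M₂` never mix, the centre ends in the same state in both graphs.
-/

theorem sumAgg_map_val {V : Type} (d : ℕ) (s : Finset V) (f : V → Vec d) (j : Fin d) :
    sumAgg d (s.val.map f) j = ∑ u ∈ s, f u j := by
  simp only [sumAgg, Multiset.map_map]
  rfl

section MessagePassing

variable {V W : Type} [Fintype V] [DecidableEq V] [Fintype W] [DecidableEq W]

theorem MPNN.emb_eq_of_edgeless (M : MPNN) {adj : V → V → Bool} {adj' : W → W → Bool}
    (h : ∀ u w, adj u w = false) (h' : ∀ u w, adj' u w = false)
    {c : V → Vec (M.dims 0)} {c' : W → Vec (M.dims 0)} {u : V} {u' : W} (hc : c u = c' u') :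
    ∀ i, M.emb adj c i u = M.emb adj' c' i u'
  | 0 => hc
  | i + 1 => by
    simp only [MPNN.emb, h, h', Bool.false_eq_true, Finset.filter_false, Finset.empty_val,
      Multiset.map_zero, M.emb_eq_of_edgeless h h' hc i]

theorem MPNN.emb_equiv (M : MPNN) (e : V ≃ W) {adj : V → V → Bool} {adj' : W → W → Bool}
    (hadj : ∀ u w, adj' (e u) (e w) = adj u w)
    {c : V → Vec (M.dims 0)} {c' : W → Vec (M.dims 0)} (hc : ∀ u, c' (e u) = c u) :
    ∀ i u, M.emb adj' c' i (e u) = M.emb adj c i u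
  | 0, u => hc u
  | i + 1, u => by
    have hnbhd : Finset.univ.filter (fun w => adj' (e u) w = true) =
        (Finset.univ.filter fun w => adj u w = true).map e.toEmbedding := by
      ext w
      obtain ⟨w, rfl⟩ := e.surjective w
      simp [hadj]
    simp only [MPNN.emb, hnbhd, Finset.map_val, Multiset.map_map, Function.comp_def,
      Equiv.coe_toEmbedding, M.emb_equiv e hadj hc i]

end MessagePassing

namespace TandGTGNN

variable {k : ℕ} (T : TandGTGNN k) {V W : Type} [Fintype V] [DecidableEq V] [Fintype W]
  [DecidableEq W]

theorem state_zero_eq_of_edgeless {TG : TemporalGraph V k} {TG' : TemporalGraph W k}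
    (h : ∀ u w, TG.adj 0 u w = false) (h' : ∀ u w, TG'.adj 0 u w = false) {u : V} {u' : W}
    (hc : TG.colVec 0 u = TG'.colVec 0 u') :
    T.state TG 0 u = T.state TG' 0 u' := by
  simp only [state, MPNN.run]
  rw [T.M₁.emb_eq_of_edgeless h h' (c' := fun w => Vec.cast T.dim1.symm (TG'.colVec 0 w))
      (congrArg (Vec.cast T.dim1.symm) hc), T.M₂.emb_eq_of_edgeless h h'
      (c' := fun _ => Vec.cast T.dim2.symm fun _ => 0) rfl]

theorem state_succ_eq_of_automorphism {TG TG' : TemporalGraph V k} {i : ℕ}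
    (hadj : TG.adj (i + 1) = TG'.adj (i + 1)) (hcol : TG.colVec (i + 1) = TG'.colVec (i + 1))
    (π : V ≃ V) (hπ : ∀ u w, TG.adj (i + 1) (π u) (π w) = TG.adj (i + 1) u w)
    (hstate : ∀ u, T.state TG i (π u) = T.state TG' i u) {v : V} (hv : π v = v) :
    T.state TG (i + 1) v = T.state TG' (i + 1) v := by
  have hM₂ := T.M₂.emb_equiv π hπ (c' := fun u => Vec.cast T.dim2.symm (T.state TG i u))
    (c := fun u => Vec.cast T.dim2.symm (T.state TG' i u))
    (fun u => congrArg _ (hstate u)) T.M₂.depth v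
  rw [hv] at hM₂
  simp only [state, MPNN.run]
  rw [← hadj, ← hcol, hM₂]

end TandGTGNN

def starAdj (i : ℕ) (u w : Fin 3) : Bool := i != 0 && (u == 0 || w == 0) && u != w

theorem starAdj_comm (i : ℕ) (u w : Fin 3) : starAdj i u w = starAdj i w u := by
  rw [starAdj, starAdj, Bool.or_comm, bne_comm (a := u)]

def starTG (a : Fin 3) : TemporalGraph (Fin 3) 1 where
  len := 2
  len_pos := two_pos
  adj := starAdj
  symm := starAdj_comm
  label i u _ := if i = 0 then u == a else u == 1

def AffineLayer.toFNN {m n : ℕ} (l : AffineLayer m n) : FNN m n where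
  depth := 1
  dims i := if i = 0 then m else n
  dim_in := rfl
  dim_out := rfl
  layers
    | 0 => l
    | _ + 1 => ⟨0, 0⟩

theorem Vec.append_two_two (x y : Vec 2) : Fin.append x y = ![x 0, x 1, y 0, y 1] := by
  ext j
  fin_cases j <;> rfl

def recLayer₀ : AffineLayer 4 2 := ⟨![![1, 1, 0, 0], ![1, 0, 0, 0]], ![-1, 0]⟩

def recLayer₁ : AffineLayer 4 1 := ⟨![![0, 1, 1, 0]], 0⟩

theorem recLayer₀_eval (x y : Vec 2) :
    recLayer₀.eval (Fin.append x y) = ![trReLU (x 0 + x 1 - 1), trReLU (x 0)] := by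
  ext j
  fin_cases j <;>
    simp [recLayer₀, AffineLayer.eval, Vec.append_two_two, Fin.sum_univ_four, sub_eq_add_neg]

theorem recLayer₁_eval (x y : Vec 2) :
    recLayer₁.eval (Fin.append x y) 0 = trReLU (x 1 + y 0) := by
  simp [recLayer₁, AffineLayer.eval, Vec.append_two_two, Fin.sum_univ_four]

def recMPNN : MPNNhat where
  depth := 2
  dims i := if i < 2 then 2 else 1
  comb
    | 0 => recLayer₀.toFNN
    | 1 => recLayer₁.toFNN
    | _ + 2 => AffineLayer.toFNN ⟨0, 0⟩

theorem recMPNN_run {V : Type} [Fintype V] [DecidableEq V] (adj : V → V → Bool)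
    (c : V → Vec 2) (v : V) :
    recMPNN.toMPNN.run adj c v (0 : Fin 1) = trReLU (trReLU (c v 0) +
      ∑ u ∈ Finset.univ.filter (fun u => adj v u = true), trReLU (c u 0 + c u 1 - 1)) := by
  change recLayer₁.eval (Fin.append (recLayer₀.eval (Fin.append (c v) (sumAgg 2 _)))
    (sumAgg 2 ((Finset.univ.filter fun u => adj v u = true).val.map
      fun u => recLayer₀.eval (Fin.append (c u) (sumAgg 2 _))))) 0 = _
  rw [recLayer₁_eval, sumAgg_map_val]
  simp [recLayer₀_eval]

def recTGNN : RecTGNN 1 := ⟨recMPNN, rfl, ⟨fun _ _ => 1, 0⟩⟩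

namespace recTGNN

variable {V : Type} [Fintype V] [DecidableEq V] (TG : TemporalGraph V 1)

theorem state_zero (v : V) :
    recTGNN.state TG 0 v (0 : Fin 1) = trReLU (trReLU (TG.colVec 0 v 0) +
      ∑ u ∈ Finset.univ.filter (fun u => TG.adj 0 v u = true),
        trReLU (TG.colVec 0 u 0 + 0 - 1)) :=
  recMPNN_run (TG.adj 0) (recTGNN.input TG 0) v

theorem state_succ (i : ℕ) (v : V) :
    recTGNN.state TG (i + 1) v (0 : Fin 1) = trReLU (trReLU (TG.colVec (i + 1) v 0) +
      ∑ u ∈ Finset.univ.filter (fun u => TG.adj (i + 1) v u = true),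
        trReLU (TG.colVec (i + 1) u 0 + recTGNN.state TG i u (0 : Fin 1) - 1)) :=
  recMPNN_run (TG.adj (i + 1)) (recTGNN.input TG (i + 1)) v

theorem output_eq (v : V) :
    recTGNN.output TG v = trReLU (recTGNN.state TG (TG.len - 1) v (0 : Fin 1)) := by
  change trReLU (∑ i : Fin 1, ((1 : ℚ) : ℝ) * recTGNN.state TG (TG.len - 1) v i +
    ((0 : ℚ) : ℝ)) = _
  rw [Fin.sum_univ_one]
  simp

end recTGNN

theorem starTG_colVec_zero (a u : Fin 3) :
    (starTG a).colVec 0 u 0 = if u = a then 1 else 0 := by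
  simp [starTG, TemporalGraph.colVec]

theorem starTG_colVec_one (a u : Fin 3) :
    (starTG a).colVec 1 u 0 = if u = 1 then 1 else 0 := by
  simp [starTG, TemporalGraph.colVec]

theorem recTGNN.output_starTG (a : Fin 3) :
    recTGNN.output (starTG a) 0 = if a = 1 then 1 else 0 := by
  have hnbhd₀ (u : Fin 3) : Finset.univ.filter (fun w => starAdj 0 u w = true) = ∅ := by
    decide +revert
  have hnbhd₁ : Finset.univ.filter (fun w => starAdj 1 0 w = true) = {1, 2} := by decide
  have hstate₀ (u : Fin 3) :
      recTGNN.state (starTG a) 0 u (0 : Fin 1) = if u = a then 1 else 0 := by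
    rw [recTGNN.state_zero]
    simp only [starTG_colVec_zero]
    change trReLU (_ + ∑ w ∈ Finset.univ.filter (fun w => starAdj 0 u w = true), _) = _
    split_ifs <;> simp [hnbhd₀, trReLU]
  rw [recTGNN.output_eq, show (starTG a).len - 1 = 0 + 1 from rfl, recTGNN.state_succ]
  simp only [zero_add, starTG_colVec_one, hstate₀]
  change trReLU (trReLU (_ + ∑ w ∈ Finset.univ.filter (fun w => starAdj 1 0 w = true), _)) = _
  rw [hnbhd₁, Finset.sum_pair (by decide)]
  fin_cases a <;> norm_num [trReLU, Fin.ext_iff]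

theorem TandGTGNN.output_starTG_one_eq_two (T : TandGTGNN 1) :
    T.output (starTG 1) 0 = T.output (starTG 2) 0 := by
  have hedgeless (a : Fin 3) : ∀ u w, (starTG a).adj 0 u w = false := by decide +revert
  have hstate₀ (u : Fin 3) :
      T.state (starTG 1) 0 (Equiv.swap 1 2 u) = T.state (starTG 2) 0 u := by
    refine T.state_zero_eq_of_edgeless (hedgeless 1) (hedgeless 2) ?_
    ext j
    simp [Fin.fin_one_eq_zero j, starTG_colVec_zero, Equiv.swap_apply_eq_iff]
  exact congrArg T.out <| T.state_succ_eq_of_automorphism (TG := starTG 1) (TG' := starTG 2)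
    (i := 0) rfl rfl _ (by decide) hstate₀ (v := 0) (by decide)

/-- part of Corollary 8, `T_rec[M̂] ≰ T_TandG[M̂,F]`: there is a recursive
TGNN over `M̂` such that every time-and-graph TGNN of the class `T_TandG[M̂,F]` disagrees
with it on some discrete pointed temporal graph. -/
theorem Trec_not_le_TandG :
    ∃ (k : ℕ) (T : RecTGNN k), ∀ T' : TandGTGNN k, T'.inHatF →
      ∃ (nv : ℕ) (TG : TemporalGraph (Fin nv) k) (v : Fin nv),
        ¬ (T.output TG v = 1 ↔ T'.output TG v = 1) := by
  refine ⟨1, recTGNN, fun T' _ => ?_⟩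
  have h₁ : recTGNN.output (starTG 1) 0 = 1 := by simp [recTGNN.output_starTG]
  have h₂ : recTGNN.output (starTG 2) 0 ≠ 1 := by simp [recTGNN.output_starTG]
  by_cases hT' : T'.output (starTG 1) 0 = 1
  · refine ⟨3, starTG 2, 0, fun hiff => h₂ (hiff.2 ?_)⟩
    rwa [← T'.output_starTG_one_eq_two]
  · exact ⟨3, starTG 1, 0, fun hiff => hT' (hiff.1 h₁)⟩
end
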